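/- For every state |ψ⟩ ∈ ℂ², (⟨+|⊗I)(I⊗T) Λ(Z) (|ψ⟩⊗|+⟩) = (1/√2) T H|ψ⟩. (T gadget of ancilla-driven quantum computation, measurement outcome 0: entangling the data qubit with an ancilla in |+⟩ by a controlled-Z, applying T to the ancilla, and projecting the data qubit onto |+⟩ leaves the ancilla in TH|ψ⟩ up to normalization 1/√2.) -/

import Mathlib

/-!
Λ(Z) followed by the contraction `⟨+|⊗I` sends `|ψ⟩⊗|+⟩` to `(1/√2)(ψ₀|+⟩ + ψ₁|−⟩) = (1/√2) H|ψ⟩`,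
and `I⊗T` acts on the qubit that is not contracted, so it commutes with `⟨+|⊗I` and is applied
last.
-/

noncomputable section

/-- The state `|+⟩ = (|0⟩+|1⟩)/√2` on one qubit. -/
def ketPlus : EuclideanSpace ℂ (Fin 2) := WithLp.toLp 2 (fun _ => (Real.sqrt 2 : ℂ)⁻¹)

/-- The Hadamard gate `H` acting on one qubit: `H|0⟩ = |+⟩`, `H|1⟩ = |−⟩`. -/
def Happ (v : EuclideanSpace ℂ (Fin 2)) : EuclideanSpace ℂ (Fin 2) :=
  WithLp.toLp 2 (fun i => (Real.sqrt 2 : ℂ)⁻¹ * (v 0 + (-1 : ℂ) ^ (i : ℕ) * v 1))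

/-- The gate `T = diag(1, e^{iπ/4})` acting on one qubit. -/
def Tapp (v : EuclideanSpace ℂ (Fin 2)) : EuclideanSpace ℂ (Fin 2) :=
  WithLp.toLp 2 (fun i => (if i = 1 then Complex.exp (Complex.I * Real.pi / 4) else 1) * v i)

/-- The gate `I ⊗ T` on two qubits (T acting on the second qubit). -/
def TsndQubit (v : Fin 2 × Fin 2 → ℂ) : Fin 2 × Fin 2 → ℂ :=
  fun p => (if p.2 = 1 then Complex.exp (Complex.I * Real.pi / 4) else 1) * v p

/-- The tensor product `|ψ⟩ ⊗ |+⟩` on two qubits. -/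
def tensorWithPlus (ψ : EuclideanSpace ℂ (Fin 2)) : Fin 2 × Fin 2 → ℂ :=
  fun p => ψ p.1 * ketPlus p.2

/-- The controlled-Z gate `Λ(Z) = |0⟩⟨0|⊗I + |1⟩⟨1|⊗Z` on two qubits. -/
def CZ (v : Fin 2 × Fin 2 → ℂ) : Fin 2 × Fin 2 → ℂ :=
  fun p => (if p.1 = 1 ∧ p.2 = 1 then (-1 : ℂ) else 1) * v p

/-- The partial contraction `(⟨+|⊗I)` against the first qubit. -/
def braPlusFst (v : Fin 2 × Fin 2 → ℂ) : EuclideanSpace ℂ (Fin 2) :=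
  WithLp.toLp 2 (fun j => (Real.sqrt 2 : ℂ)⁻¹ * (v (0, j) + v (1, j)))

theorem braPlusFst_TsndQubit (v : Fin 2 × Fin 2 → ℂ) :
    braPlusFst (TsndQubit v) = Tapp (braPlusFst v) := by
  ext j
  simp only [braPlusFst, TsndQubit, Tapp]
  ring

theorem braPlusFst_CZ_tensorWithPlus (ψ : EuclideanSpace ℂ (Fin 2)) :
    braPlusFst (CZ (tensorWithPlus ψ)) = (Real.sqrt 2 : ℂ)⁻¹ • Happ ψ := by
  ext j
  fin_cases j <;> simp [braPlusFst, CZ, tensorWithPlus, ketPlus, Happ] <;> ring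

theorem Tapp_smul (c : ℂ) (v : EuclideanSpace ℂ (Fin 2)) : Tapp (c • v) = c • Tapp v := by
  ext j
  simp only [Tapp, PiLp.smul_apply, smul_eq_mul]
  ring

/-- T gadget, outcome 0: `(⟨+|⊗I)(I⊗T) Λ(Z) (|ψ⟩⊗|+⟩) = (1/√2) TH|ψ⟩`. -/
theorem T_gadget_outcome_zero (ψ : EuclideanSpace ℂ (Fin 2)) :
    braPlusFst (TsndQubit (CZ (tensorWithPlus ψ))) =
      (Real.sqrt 2 : ℂ)⁻¹ • Tapp (Happ ψ) := by
  rw [braPlusFst_TsndQubit, braPlusFst_CZ_tensorWithPlus, Tapp_smul]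

end
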